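/- Let G = ℤ/2 and k = ℂ. The rings R₁ = ℂ[y,z]/(z²) and R₂ = ℂ[y,z]/(z²) ⊗_ℂ ℂ[ℤ/2] are not isomorphic as rings. Consequently, Hochschild cohomology of the dg-algebra of cochains is not invariant under Morita equivalence of orbifold groupoids. -/

import Mathlib

/-!
An idempotent of `ℂ[y,z]/(z²)` is the class of a polynomial `a` with `z² ∣ a (1 - a)`; since the
radical `(z)` of `(z²)` is prime, `a` or `1 - a` is nilpotent modulo `z²`, so the idempotent is `0`
or `1`. The second ring, on the other hand, contains the idempotent `1 ⊗ [0]`, which is neither.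
-/

open scoped TensorProduct

/-- The ring `ℂ[y,z]/(z²)`, with `y = X 0` and `z = X 1`. -/
noncomputable abbrev Rone : Type :=
  MvPolynomial (Fin 2) ℂ ⧸ Ideal.span {(MvPolynomial.X 1 : MvPolynomial (Fin 2) ℂ) ^ 2}

theorem Ideal.Quotient.eq_zero_or_eq_one_of_isIdempotentElem {R : Type*} [CommRing R]
    {I : Ideal R} (hI : I.radical.IsPrime) {e : R ⧸ I} (he : IsIdempotentElem e) :
    e = 0 ∨ e = 1 := by
  obtain ⟨a, rfl⟩ := Ideal.Quotient.mk_surjective e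
  have hmem : a * (1 - a) ∈ I.radical := by
    refine Ideal.le_radical (Ideal.Quotient.eq_zero_iff_mem.mp ?_)
    rw [map_mul, map_sub, map_one, mul_sub, mul_one, he.eq, sub_self]
  rcases hI.mem_or_mem hmem with ⟨n, hn⟩ | ⟨n, hn⟩
  · refine .inl (he.eq_zero_of_isNilpotent ⟨n, ?_⟩)
    rw [← map_pow, Ideal.Quotient.eq_zero_iff_mem.mpr hn]
  · refine .inr (sub_eq_zero.mp (he.one_sub.eq_zero_of_isNilpotent ⟨n, ?_⟩)).symm
    rw [← map_one (Ideal.Quotient.mk I), ← map_sub, ← map_pow,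
      Ideal.Quotient.eq_zero_iff_mem.mpr hn]

theorem Ideal.isPrime_radical_span_singleton_pow {R : Type*} [CommRing R] {p : R} (hp : Prime p)
    {n : ℕ} (hn : n ≠ 0) : (Ideal.span {p ^ n}).radical.IsPrime := by
  rw [← Ideal.span_singleton_pow, Ideal.radical_pow _ hn,
    ((Ideal.span_singleton_prime hp.ne_zero).mpr hp).radical]
  exact (Ideal.span_singleton_prime hp.ne_zero).mpr hp

theorem Rone.isPrime_radical :
    (Ideal.span {(MvPolynomial.X 1 : MvPolynomial (Fin 2) ℂ) ^ 2}).radical.IsPrime :=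
  Ideal.isPrime_radical_span_singleton_pow MvPolynomial.X_prime two_ne_zero

instance : Nontrivial Rone :=
  Ideal.Quotient.nontrivial_iff.mpr fun h =>
    Rone.isPrime_radical.ne_top (by rw [h, Ideal.radical_top])

theorem Rone.eq_zero_or_eq_one_of_isIdempotentElem {e : Rone} (he : IsIdempotentElem e) :
    e = 0 ∨ e = 1 :=
  Ideal.Quotient.eq_zero_or_eq_one_of_isIdempotentElem Rone.isPrime_radical he

theorem Algebra.TensorProduct.exists_isIdempotentElem_ne_zero_ne_one {R A B : Type*}
    [CommSemiring R] [Semiring A] [Semiring B] [Algebra R A] [Algebra R B] [Module.Flat R B]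
    (hA : Function.Injective (algebraMap R A)) {f : B} (hf : IsIdempotentElem f)
    (hf0 : f ≠ 0) (hf1 : f ≠ 1) :
    ∃ e : A ⊗[R] B, IsIdempotentElem e ∧ e ≠ 0 ∧ e ≠ 1 := by
  have hinj := Algebra.TensorProduct.includeRight_injective (A := A) (B := B) hA
  exact ⟨_, hf.map includeRight, (map_ne_zero_iff _ hinj).mpr hf0, (map_ne_one_iff _ hinj).mpr hf1⟩

namespace MonoidAlgebra

variable {k M : Type*} [Semiring k] [MonoidWithZero M]

theorem isIdempotentElem_single_zero_one : IsIdempotentElem (single (0 : M) (1 : k)) := by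
  rw [IsIdempotentElem, single_mul_single, mul_zero, mul_one]

theorem single_zero_one_ne_one [Nontrivial k] [Nontrivial M] : single (0 : M) (1 : k) ≠ 1 := by
  rw [one_def, Ne, single_left_inj one_ne_zero]
  exact zero_ne_one

end MonoidAlgebra

/-- The rings `R₁ = ℂ[y,z]/(z²)` and
`R₂ = ℂ[y,z]/(z²) ⊗_ℂ ℂ[ℤ/2]` are not isomorphic as rings.  (Consequently, the
Hochschild cohomology of the dg-algebra of cochains is not invariant under Morita
equivalence of orbifold groupoids.) -/
theorem stmt16 : IsEmpty (Rone ≃+* (Rone ⊗[ℂ] MonoidAlgebra ℂ (ZMod 2))) := by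
  obtain ⟨e, he, he0, he1⟩ :=
    Algebra.TensorProduct.exists_isIdempotentElem_ne_zero_ne_one
      (A := Rone) (B := MonoidAlgebra ℂ (ZMod 2)) (algebraMap ℂ Rone).injective
      MonoidAlgebra.isIdempotentElem_single_zero_one
      (MonoidAlgebra.single_ne_zero.mpr one_ne_zero) MonoidAlgebra.single_zero_one_ne_one
  refine ⟨fun φ => ?_⟩
  rcases Rone.eq_zero_or_eq_one_of_isIdempotentElem (he.map φ.symm) with h | h
  · exact he0 (by simpa using congrArg φ h)
  · exact he1 (by simpa using congrArg φ h)
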